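/- arXiv:2307.07670 — 3 statements merged into one kernel-verified Lean document; each statement's English description precedes it below -/
import Mathlib

section
/- Let (S, (A_i)_{i=1}^m, H, P, (R_i)_{i=1}^m) be a tabular episodic Markov game satisfying Condition 2 with target policy π† and gap η > 0. Under the η-gap attack: (i) for every agent i and every Markov product policy π_{-i} of the other agents, π†_i is a best response of agent i toward π_{-i} in the post-attack game, i.e., Ṽ^{π†_i × π_{-i}}_{i,1}(s) = Ṽ^{†,π_{-i}}_{i,1}(s) for every state s; (ii) π† is a Nash equilibrium of the post-attack game; and (iii) if every state s ∈ S is reachable (visited with positive probability) at every step h ∈ {1,…,H} under π†, then π† is the unique Nash equilibrium of the post-attack game. -/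
/-!
Under the `η`-gap attack, any joint action in which agent `i` leaves `π†_i` is paid
`η + (H - h) Δ_R^{(i)}` less than `π†_h(s)`. Once agent `i` follows `π†_i`, her future
value from step `h + 1` lies in `[(H - h) min R_i, (H - h) max R_i]`, so the penalty
`(H - h) Δ_R^{(i)}` outweighs whatever a deviation changes in that future value. Backward
induction then shows that, whatever the other agents play, switching agent `i` to `π†_i` raises
her value at every step `h` by at least `η` times the probability she put off `π†_i`; this gives
(i) and (ii). For (iii), if a Nash equilibrium agrees with `π†` before step `h`, the gain of the
same switch at step `1` is the reach-weighted sum of those gains at step `h`; it cannot be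
positive, so with every state reachable the equilibrium puts full mass on `π†` at step `h`.
-/

open Finset

namespace MGAttack

variable {S : Type} [Fintype S] [DecidableEq S]
variable {m : ℕ} {A : Fin m → Type} [∀ i, Fintype (A i)] [∀ i, DecidableEq (A i)]

/-- `VA P f π n h s`: expected sum of `f` over `n` steps starting from step `h` in
state `s`, when joint actions are drawn from the joint pmf `π` and states evolve
according to `P`.  With `f` a mean-reward function this is the value function. -/
noncomputable def VA (P : ℕ → S → (∀ i, A i) → S → ℝ) (f : ℕ → S → (∀ i, A i) → ℝ)
    (π : ℕ → S → (∀ i, A i) → ℝ) : ℕ → ℕ → S → ℝ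
  | 0, _, _ => 0
  | n + 1, h, s => ∑ a, π h s a * (f h s a + ∑ s', P h s a s' * VA P f π n (h + 1) s')

/-- Value function `V^π_h(s)` for horizon `H` (steps `h, h+1, …, H`). -/
noncomputable def Vf (P : ℕ → S → (∀ i, A i) → S → ℝ) (R : ℕ → S → (∀ i, A i) → ℝ)
    (π : ℕ → S → (∀ i, A i) → ℝ) (H h : ℕ) (s : S) : ℝ :=
  VA P R π (H + 1 - h) h s

/-- Q-function `Q^π_h(s,a)` for horizon `H`. -/
noncomputable def Qf (P : ℕ → S → (∀ i, A i) → S → ℝ) (R : ℕ → S → (∀ i, A i) → ℝ)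
    (π : ℕ → S → (∀ i, A i) → ℝ) (H h : ℕ) (s : S) (a : ∀ i, A i) : ℝ :=
  R h s a + ∑ s', P h s a s' * VA P R π (H - h) (h + 1) s'

/-- Joint pmf of a Markov product policy. -/
noncomputable def jp (π : ∀ i : Fin m, ℕ → S → A i → ℝ) : ℕ → S → (∀ i, A i) → ℝ :=
  fun h s a => ∏ i, π i h s (a i)

/-- Joint action prescribed by a deterministic (product) policy. -/
def tgtJ (τ : ∀ i : Fin m, ℕ → S → A i) (h : ℕ) (s : S) : ∀ i, A i := fun i => τ i h s

/-- A deterministic policy viewed as a (point-mass) stochastic policy. -/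
noncomputable def detP (τ : ∀ i : Fin m, ℕ → S → A i) : ∀ i : Fin m, ℕ → S → A i → ℝ :=
  fun i h s b => if b = τ i h s then 1 else 0

/-- `P` is a transition kernel for the steps `1, …, H`. -/
def IsKernel (H : ℕ) (P : ℕ → S → (∀ i, A i) → S → ℝ) : Prop :=
  ∀ h ∈ Finset.Icc 1 H, ∀ s a, (∀ s', 0 ≤ P h s a s') ∧ ∑ s', P h s a s' = 1

/-- `π` is a Markov product policy for the steps `1, …, H`. -/
def IsPolicy (H : ℕ) (π : ∀ i : Fin m, ℕ → S → A i → ℝ) : Prop :=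
  ∀ i : Fin m, ∀ h ∈ Finset.Icc 1 H, ∀ s, (∀ b, 0 ≤ π i h s b) ∧ ∑ b, π i h s b = 1

/-- `πi` is a Markov policy for the single agent `i`. -/
def IsPolicyI (H : ℕ) {i : Fin m} (πi : ℕ → S → A i → ℝ) : Prop :=
  ∀ h ∈ Finset.Icc 1 H, ∀ s, (∀ b, 0 ≤ πi h s b) ∧ ∑ b, πi h s b = 1

/-- The mean rewards all lie in `[0,1]`. -/
def IsReward (H : ℕ) (R : Fin m → ℕ → S → (∀ i, A i) → ℝ) : Prop :=
  ∀ i, ∀ h ∈ Finset.Icc 1 H, ∀ s a, R i h s a ∈ Set.Icc (0 : ℝ) 1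

/-- `d_h(s,a) = m/2 + (1/2) ∑_i 1(a_i = π†_{i,h}(s))` of the `d`-portion attack. -/
noncomputable def dfun (τ : ∀ i : Fin m, ℕ → S → A i) (h : ℕ) (s : S) (a : ∀ i, A i) : ℝ :=
  (m : ℝ) / 2 + (∑ i, if a i = τ i h s then (1 : ℝ) else 0) / 2

/-- Post-attack mean rewards of the `d`-portion attack (target `τ`, worse policy `τ'`). -/
noncomputable def Rport (R : Fin m → ℕ → S → (∀ i, A i) → ℝ) (τ τ' : ∀ i : Fin m, ℕ → S → A i)
    (i : Fin m) : ℕ → S → (∀ i, A i) → ℝ :=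
  fun h s a => (dfun τ h s a / m) * R i h s (tgtJ τ h s)
    + (1 - dfun τ h s a / m) * R i h s (tgtJ τ' h s)

/-- Post-attack transition probabilities of the `d`-portion attack. -/
noncomputable def Pport (P : ℕ → S → (∀ i, A i) → S → ℝ) (τ τ' : ∀ i : Fin m, ℕ → S → A i) :
    ℕ → S → (∀ i, A i) → S → ℝ :=
  fun h s a s' => (dfun τ h s a / m) * P h s (tgtJ τ h s) s'
    + (1 - dfun τ h s a / m) * P h s (tgtJ τ' h s) s'

/-- `Δ^{†−}_{i,h}(s) = Q^{π†}_{i,h}(s, π†_h(s)) − Q^{π†}_{i,h}(s, π⁻_h(s))` (original game). -/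
noncomputable def Δdag (P : ℕ → S → (∀ i, A i) → S → ℝ) (R : Fin m → ℕ → S → (∀ i, A i) → ℝ)
    (τ τ' : ∀ i : Fin m, ℕ → S → A i) (H : ℕ) (i : Fin m) (h : ℕ) (s : S) : ℝ :=
  Qf P (R i) (jp (detP τ)) H h s (tgtJ τ h s) - Qf P (R i) (jp (detP τ)) H h s (tgtJ τ' h s)

/-- Post-attack mean rewards of the `η`-gap attack; `ΔR i` is the reward spread of agent `i`. -/
noncomputable def Rgap (R : Fin m → ℕ → S → (∀ i, A i) → ℝ) (τ : ∀ i : Fin m, ℕ → S → A i)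
    (η : ℝ) (ΔR : Fin m → ℝ) (H : ℕ) (i : Fin m) : ℕ → S → (∀ i, A i) → ℝ :=
  fun h s a =>
    if a = tgtJ τ h s then R i h s a
    else R i h s (tgtJ τ h s) - (η + ((H - h : ℕ) : ℝ) * ΔR i) * (if a i = τ i h s then 0 else 1)

/-- Post-attack mean rewards of the mixed attack. -/
noncomputable def Rmix (R : Fin m → ℕ → S → (∀ i, A i) → ℝ) (τ : ∀ i : Fin m, ℕ → S → A i)
    (i : Fin m) : ℕ → S → (∀ i, A i) → ℝ :=
  fun h s a => (if a i = τ i h s then (1 : ℝ) else 0) * R i h s (tgtJ τ h s)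

/-- Post-attack transition probabilities of the mixed attack. -/
def Pmix (P : ℕ → S → (∀ i, A i) → S → ℝ) (τ : ∀ i : Fin m, ℕ → S → A i) :
    ℕ → S → (∀ i, A i) → S → ℝ :=
  fun h s a s' => P h s (tgtJ τ h s) s'

/-- Probability of being in state `s'` after `n` steps, starting from `(h, s)` and following
the deterministic policy `τ` under the transitions `P`. -/
noncomputable def reach (P : ℕ → S → (∀ i, A i) → S → ℝ) (τ : ∀ i : Fin m, ℕ → S → A i) :
    ℕ → ℕ → S → S → ℝ
  | 0, _, s, s' => if s' = s then 1 else 0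
  | n + 1, h, s, s' => ∑ t, P h s (tgtJ τ h s) t * reach P τ n (h + 1) t s'

/-- Expected sum of a state-dependent function along the Markov chain `Ps`. -/
noncomputable def SSum (Ps : ℕ → S → S → ℝ) (f : ℕ → S → ℝ) : ℕ → ℕ → S → ℝ
  | 0, _, _ => 0
  | n + 1, h, s => f h s + ∑ s', Ps h s s' * SSum Ps f n (h + 1) s'

end MGAttack

namespace MGAttack

lemma apply_le_one_of_sum_eq_one {α : Type*} [Fintype α] {f : α → ℝ} (hf0 : ∀ b, 0 ≤ f b)
    (hf1 : ∑ b, f b = 1) (b : α) : f b ≤ 1 :=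
  hf1 ▸ single_le_sum (fun c _ => hf0 c) (mem_univ b)

lemma eq_ite_of_apply_eq_one {α : Type*} [Fintype α] [DecidableEq α] {f : α → ℝ}
    (hf0 : ∀ b, 0 ≤ f b) (hf1 : ∑ b, f b = 1) {b₀ : α} (hb₀ : f b₀ = 1) :
    f = fun b => if b = b₀ then 1 else 0 := by
  have hrest : ∑ b ∈ univ.erase b₀, f b = 0 := by
    linarith [add_sum_erase univ f (mem_univ b₀)]
  funext b
  split_ifs with hb
  · rwa [hb]
  · exact (sum_eq_zero_iff_of_nonneg fun c _ => hf0 c).mp hrest b (mem_erase.mpr ⟨hb, mem_univ b⟩)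

section JointPolicy

variable {S : Type} {m : ℕ} {A : Fin m → Type}

lemma jp_nonneg {π : ∀ i : Fin m, ℕ → S → A i → ℝ} {h : ℕ} {s : S}
    (hπ : ∀ j b, 0 ≤ π j h s b) (a : ∀ j, A j) : 0 ≤ jp π h s a :=
  prod_nonneg fun j _ => hπ j (a j)

lemma jp_update_piSplitAt_symm (π : ∀ i : Fin m, ℕ → S → A i → ℝ) (i : Fin m)
    (κ : ℕ → S → A i → ℝ) (h : ℕ) (s : S) (b : A i) (c : ∀ j : {j // j ≠ i}, A j) :
    jp (Function.update π i κ) h s ((Equiv.piSplitAt i A).symm (b, c))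
      = κ h s b * ∏ j : {j // j ≠ i}, π j h s (c j) := by
  rw [jp, Fintype.prod_eq_mul_prod_subtype_ne _ i]
  congr 1
  · simp [Equiv.piSplitAt]
  · exact prod_congr rfl fun j _ => by simp [Equiv.piSplitAt, j.2]

lemma jp_detP [∀ i, DecidableEq (A i)] (τ : ∀ i : Fin m, ℕ → S → A i) (h : ℕ) (s : S)
    (a : ∀ j, A j) : jp (detP τ) h s a = if a = tgtJ τ h s then 1 else 0 := by
  simp only [jp, detP, prod_boole, mem_univ, true_implies, funext_iff, tgtJ]

lemma Rgap_apply [∀ i, DecidableEq (A i)] (R : Fin m → ℕ → S → (∀ i, A i) → ℝ)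
    (τ : ∀ i : Fin m, ℕ → S → A i) (η : ℝ) (ΔR : Fin m → ℝ) (H : ℕ) (i : Fin m) (h : ℕ)
    (s : S) (a : ∀ j, A j) :
    Rgap R τ η ΔR H i h s a
      = R i h s (tgtJ τ h s)
        - (η + ((H - h : ℕ) : ℝ) * ΔR i) * (if a i = τ i h s then 0 else 1) := by
  unfold Rgap
  split_ifs with ha hai <;> simp_all [tgtJ]

variable [∀ i, Fintype (A i)]

lemma sum_jp {π : ∀ i : Fin m, ℕ → S → A i → ℝ} {h : ℕ} {s : S}
    (hπ : ∀ j, ∑ b, π j h s b = 1) : ∑ a, jp π h s a = 1 := by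
  simp only [jp, ← Fintype.prod_sum, hπ, prod_const_one]

lemma IsPolicy.jp_nonneg_and_sum_eq_one {H : ℕ} {π : ∀ i : Fin m, ℕ → S → A i → ℝ}
    (hπ : IsPolicy H π) :
    ∀ h ∈ Icc 1 H, ∀ s, (∀ a, 0 ≤ jp π h s a) ∧ ∑ a, jp π h s a = 1 :=
  fun h hh s => ⟨jp_nonneg fun j => (hπ j h hh s).1, sum_jp fun j => (hπ j h hh s).2⟩

lemma IsPolicy.update {H : ℕ} {π : ∀ i : Fin m, ℕ → S → A i → ℝ} (hπ : IsPolicy H π)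
    {i : Fin m} {κ : ℕ → S → A i → ℝ} (hκ : IsPolicyI H κ) :
    IsPolicy H (Function.update π i κ) := by
  intro j
  by_cases hj : j = i
  · subst hj
    rw [Function.update_self]
    exact hκ
  · simpa only [Function.update_of_ne hj] using hπ j

lemma sum_jp_update_mul (π : ∀ i : Fin m, ℕ → S → A i → ℝ) (i : Fin m)
    (κ : ℕ → S → A i → ℝ) (h : ℕ) (s : S) (F : (∀ j, A j) → ℝ) :
    ∑ a, jp (Function.update π i κ) h s a * F a
      = ∑ b, κ h s b * ∑ c : (∀ j : {j // j ≠ i}, A j),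
          (∏ j : {j // j ≠ i}, π j h s (c j)) * F ((Equiv.piSplitAt i A).symm (b, c)) := by
  rw [← (Equiv.piSplitAt i A).symm.sum_comp, Fintype.sum_prod_type]
  simp only [jp_update_piSplitAt_symm, mul_sum, mul_assoc]

lemma sum_jp_update_mul_apply {π : ∀ i : Fin m, ℕ → S → A i → ℝ} {i : Fin m} {h : ℕ} {s : S}
    (hπ : ∀ j ≠ i, ∑ b, π j h s b = 1) (κ : ℕ → S → A i → ℝ) (g : A i → ℝ) :
    ∑ a, jp (Function.update π i κ) h s a * g (a i) = ∑ b, κ h s b * g b := by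
  have hothers : ∑ c : (∀ j : {j // j ≠ i}, A j), ∏ j : {j // j ≠ i}, π j h s (c j) = 1 := by
    rw [← Fintype.prod_sum]
    exact prod_eq_one fun j _ => hπ j j.2
  rw [sum_jp_update_mul]
  refine sum_congr rfl fun b _ => ?_
  simp [Equiv.piSplitAt, ← sum_mul, hothers]

variable [∀ i, DecidableEq (A i)]

lemma detP_isPolicy (H : ℕ) (τ : ∀ i : Fin m, ℕ → S → A i) : IsPolicy H (detP τ) := by
  refine fun i h _ s => ⟨fun b => ?_, by simp [detP]⟩
  unfold detP
  split_ifs <;> norm_num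

lemma jp_eq_jp_detP {H : ℕ} {π : ∀ i : Fin m, ℕ → S → A i → ℝ} (hπ : IsPolicy H π)
    {τ : ∀ i : Fin m, ℕ → S → A i} {h : ℕ} (hh : h ∈ Icc 1 H)
    (hτ : ∀ j s, π j h s (τ j h s) = 1) : jp π h = jp (detP τ) h := by
  funext s a
  exact prod_congr rfl fun j _ =>
    congrFun (eq_ite_of_apply_eq_one (hπ j h hh s).1 (hπ j h hh s).2 (hτ j s)) (a j)

lemma sum_jp_update_mul_update (π : ∀ i : Fin m, ℕ → S → A i → ℝ) {i : Fin m}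
    {κ : ℕ → S → A i → ℝ} {h : ℕ} {s : S} (hκ : ∑ b, κ h s b = 1)
    (τ : ∀ i : Fin m, ℕ → S → A i) (F : (∀ j, A j) → ℝ) :
    ∑ a, jp (Function.update π i κ) h s a * F (Function.update a i (τ i h s))
      = ∑ a, jp (Function.update π i (detP τ i)) h s a * F a := by
  have hupd : ∀ (b : A i) (c : ∀ j : {j // j ≠ i}, A j),
      Function.update ((Equiv.piSplitAt i A).symm (b, c)) i (τ i h s)
        = (Equiv.piSplitAt i A).symm (τ i h s, c) := by
    intro b c
    ext j
    by_cases hj : j = i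
    · subst hj
      simp [Equiv.piSplitAt]
    · simp [Equiv.piSplitAt, hj]
  simp only [sum_jp_update_mul, hupd, ← sum_mul, hκ, one_mul, detP, ite_mul, zero_mul,
    sum_ite_eq']
  simp

lemma sum_jp_update_detP_mul_Rgap {π : ∀ i : Fin m, ℕ → S → A i → ℝ} {i : Fin m} {h : ℕ}
    {s : S} (hπ : ∀ j ≠ i, ∑ b, π j h s b = 1) (R : Fin m → ℕ → S → (∀ i, A i) → ℝ)
    (τ : ∀ i : Fin m, ℕ → S → A i) (η : ℝ) (ΔR : Fin m → ℝ) (H : ℕ) :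
    ∑ a, jp (Function.update π i (detP τ i)) h s a * Rgap R τ η ΔR H i h s a
      = R i h s (tgtJ τ h s) := by
  simp only [Rgap_apply]
  rw [sum_jp_update_mul_apply hπ (detP τ i) fun b =>
    R i h s (tgtJ τ h s) - (η + ((H - h : ℕ) : ℝ) * ΔR i) * if b = τ i h s then 0 else 1]
  simp [detP]

end JointPolicy

lemma Rgap_add_le_update {S : Type} [Fintype S] {m : ℕ} {A : Fin m → Type}
    [∀ i, DecidableEq (A i)] {P : ℕ → S → (∀ i, A i) → S → ℝ} {h : ℕ} {s : S}
    (hP : ∀ a, (∀ s', 0 ≤ P h s a s') ∧ ∑ s', P h s a s' = 1)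
    (R : Fin m → ℕ → S → (∀ i, A i) → ℝ) (τ : ∀ i : Fin m, ℕ → S → A i) (η : ℝ)
    {ΔR : Fin m → ℝ} {H : ℕ} {i : Fin m} {lo hi : ℝ} (hΔ : hi - lo ≤ ΔR i) {V : S → ℝ}
    (hV : ∀ s', V s' ∈ Set.Icc ((H - h : ℕ) * lo) ((H - h : ℕ) * hi)) (a : ∀ j, A j) :
    Rgap R τ η ΔR H i h s a + ∑ s', P h s a s' * V s' + η * (if a i = τ i h s then 0 else 1)
      ≤ Rgap R τ η ΔR H i h s (Function.update a i (τ i h s))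
        + ∑ s', P h s (Function.update a i (τ i h s)) s' * V s' := by
  by_cases ha : a i = τ i h s
  · rw [← ha, Function.update_eq_self, if_pos rfl, mul_zero, add_zero]
  have hexp : ∀ a', ∑ s', P h s a' s' * V s' ∈ Set.Icc ((H - h : ℕ) * lo) ((H - h : ℕ) * hi) :=
    fun a' => (convex_Icc _ _).sum_mem (fun s' _ => (hP a').1 s') (hP a').2 fun s' _ => hV s'
  have hpenalty : ((H - h : ℕ) : ℝ) * (hi - lo) ≤ ((H - h : ℕ) : ℝ) * ΔR i :=
    mul_le_mul_of_nonneg_left hΔ (Nat.cast_nonneg _)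
  simp only [Rgap_apply, ha, Function.update_self, if_true, if_false]
  linarith [(hexp a).2, (hexp (Function.update a i (τ i h s))).1]

section Value

variable {S : Type} [Fintype S] {m : ℕ} {A : Fin m → Type} [∀ i, Fintype (A i)]

lemma VA_mem_Icc {H : ℕ} {P : ℕ → S → (∀ i, A i) → S → ℝ} (hP : IsKernel H P)
    {f ρ : ℕ → S → (∀ i, A i) → ℝ}
    (hρ : ∀ h ∈ Icc 1 H, ∀ s, (∀ a, 0 ≤ ρ h s a) ∧ ∑ a, ρ h s a = 1) {lo hi : ℝ}
    (hf : ∀ h ∈ Icc 1 H, ∀ s, ∑ a, ρ h s a * f h s a ∈ Set.Icc lo hi) :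
    ∀ n h, 1 ≤ h → h + n ≤ H + 1 → ∀ s, VA P f ρ n h s ∈ Set.Icc (n * lo) (n * hi) := by
  intro n
  induction n with
  | zero => simp [VA]
  | succ n ih =>
    intro h h1 hn s
    have hh : h ∈ Icc 1 H := mem_Icc.mpr ⟨h1, by omega⟩
    have hnext : ∀ a, ∑ s', P h s a s' * VA P f ρ n (h + 1) s' ∈ Set.Icc (n * lo) (n * hi) :=
      fun a => (convex_Icc _ _).sum_mem (fun s' _ => (hP h hh s a).1 s') (hP h hh s a).2
        fun s' _ => ih (h + 1) (by omega) (by omega) s'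
    have hexp : ∑ a, ρ h s a * ∑ s', P h s a s' * VA P f ρ n (h + 1) s'
        ∈ Set.Icc (n * lo) (n * hi) :=
      (convex_Icc _ _).sum_mem (fun a _ => (hρ h hh s).1 a) (hρ h hh s).2 fun a _ => hnext a
    have hreward := hf h hh s
    rw [VA]
    simp only [mul_add, sum_add_distrib, Set.mem_Icc] at hexp hreward ⊢
    push_cast
    constructor <;> linarith [hexp.1, hexp.2, hreward.1, hreward.2]

variable [∀ i, DecidableEq (A i)]

lemma VA_update_add_le_of_le {H : ℕ} {P : ℕ → S → (∀ i, A i) → S → ℝ} (hP : IsKernel H P)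
    {π : ∀ i : Fin m, ℕ → S → A i → ℝ} (hπ : IsPolicy H π) {i : Fin m}
    {κ : ℕ → S → A i → ℝ} (hκ : IsPolicyI H κ) {R : Fin m → ℕ → S → (∀ i, A i) → ℝ}
    {τ : ∀ i : Fin m, ℕ → S → A i} {lo hi : ℝ}
    (hR : ∀ h ∈ Icc 1 H, ∀ s, R i h s (tgtJ τ h s) ∈ Set.Icc lo hi) (η : ℝ) {ΔR : Fin m → ℝ}
    (hΔ : hi - lo ≤ ΔR i) {n h : ℕ} (h1 : 1 ≤ h) (hn : h + (n + 1) = H + 1)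
    (hle : ∀ s', VA P (Rgap R τ η ΔR H i) (jp (Function.update π i κ)) n (h + 1) s'
      ≤ VA P (Rgap R τ η ΔR H i) (jp (Function.update π i (detP τ i))) n (h + 1) s')
    (s : S) :
    VA P (Rgap R τ η ΔR H i) (jp (Function.update π i κ)) (n + 1) h s
        + η * (1 - κ h s (τ i h s))
      ≤ VA P (Rgap R τ η ΔR H i) (jp (Function.update π i (detP τ i))) (n + 1) h s := by
  have hh : h ∈ Icc 1 H := mem_Icc.mpr ⟨h1, by omega⟩
  have hothers : ∀ j ≠ i, ∑ b, π j h s b = 1 := fun j _ => (hπ j h hh s).2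
  have hρ : ∀ a, 0 ≤ jp (Function.update π i κ) h s a :=
    jp_nonneg fun j => ((hπ.update hκ) j h hh s).1
  set Vτ := VA P (Rgap R τ η ΔR H i) (jp (Function.update π i (detP τ i))) n (h + 1)
  set G : (∀ j, A j) → ℝ := fun a => Rgap R τ η ΔR H i h s a + ∑ s', P h s a s' * Vτ s'
  have hVτ : ∀ s', Vτ s' ∈ Set.Icc ((H - h : ℕ) * lo) ((H - h : ℕ) * hi) := by
    rw [show H - h = n by omega]
    refine VA_mem_Icc hP (hπ.update (detP_isPolicy H τ i)).jp_nonneg_and_sum_eq_one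
      (fun h' hh' s' => ?_) n (h + 1) (by omega) (by omega)
    rw [sum_jp_update_detP_mul_Rgap fun j _ => (hπ j h' hh' s').2]
    exact hR h' hh' s'
  have hoff : ∑ a, jp (Function.update π i κ) h s a * (if a i = τ i h s then 0 else 1)
      = 1 - κ h s (τ i h s) := by
    rw [sum_jp_update_mul_apply hothers κ fun b => if b = τ i h s then 0 else 1]
    have hsplit := add_sum_erase univ (κ h s) (mem_univ (τ i h s))
    simp only [mul_ite, mul_zero, mul_one]
    rw [sum_ite, sum_const_zero, zero_add, filter_ne', ← (hκ h hh s).2, ← hsplit]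
    ring
  calc VA P (Rgap R τ η ΔR H i) (jp (Function.update π i κ)) (n + 1) h s
        + η * (1 - κ h s (τ i h s))
      ≤ ∑ a, jp (Function.update π i κ) h s a * (G a + η * (if a i = τ i h s then 0 else 1)) := by
        rw [VA, ← hoff, mul_sum, ← sum_add_distrib]
        refine sum_le_sum fun a _ => ?_
        nlinarith [hρ a, sum_le_sum fun s' (_ : s' ∈ univ) =>
          mul_le_mul_of_nonneg_left (hle s') ((hP h hh s a).1 s')]
    _ ≤ ∑ a, jp (Function.update π i κ) h s a * G (Function.update a i (τ i h s)) :=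
        sum_le_sum fun a _ =>
          mul_le_mul_of_nonneg_left (Rgap_add_le_update (hP h hh s) R τ η hΔ hVτ a) (hρ a)
    _ = _ := by rw [sum_jp_update_mul_update π (hκ h hh s).2, VA]

lemma VA_update_le {H : ℕ} {P : ℕ → S → (∀ i, A i) → S → ℝ} (hP : IsKernel H P)
    {π : ∀ i : Fin m, ℕ → S → A i → ℝ} (hπ : IsPolicy H π) {i : Fin m}
    {κ : ℕ → S → A i → ℝ} (hκ : IsPolicyI H κ) {R : Fin m → ℕ → S → (∀ i, A i) → ℝ}
    {τ : ∀ i : Fin m, ℕ → S → A i} {lo hi : ℝ}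
    (hR : ∀ h ∈ Icc 1 H, ∀ s, R i h s (tgtJ τ h s) ∈ Set.Icc lo hi) {η : ℝ} (hη : 0 ≤ η)
    {ΔR : Fin m → ℝ} (hΔ : hi - lo ≤ ΔR i) :
    ∀ n h, 1 ≤ h → h + n = H + 1 → ∀ s,
      VA P (Rgap R τ η ΔR H i) (jp (Function.update π i κ)) n h s
        ≤ VA P (Rgap R τ η ΔR H i) (jp (Function.update π i (detP τ i))) n h s := by
  intro n
  induction n with
  | zero => simp [VA]
  | succ n ih =>
    intro h h1 hn s
    have hκs := hκ h (mem_Icc.mpr ⟨h1, by omega⟩) s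
    have hκ1 := apply_le_one_of_sum_eq_one hκs.1 hκs.2 (τ i h s)
    have := VA_update_add_le_of_le hP hπ hκ hR η hΔ h1 hn (ih (h + 1) (by omega) (by omega)) s
    nlinarith

lemma VA_update_add_le {H : ℕ} {P : ℕ → S → (∀ i, A i) → S → ℝ} (hP : IsKernel H P)
    {π : ∀ i : Fin m, ℕ → S → A i → ℝ} (hπ : IsPolicy H π) {i : Fin m}
    {κ : ℕ → S → A i → ℝ} (hκ : IsPolicyI H κ) {R : Fin m → ℕ → S → (∀ i, A i) → ℝ}
    {τ : ∀ i : Fin m, ℕ → S → A i} {lo hi : ℝ}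
    (hR : ∀ h ∈ Icc 1 H, ∀ s, R i h s (tgtJ τ h s) ∈ Set.Icc lo hi) {η : ℝ} (hη : 0 ≤ η)
    {ΔR : Fin m → ℝ} (hΔ : hi - lo ≤ ΔR i) {n h : ℕ} (h1 : 1 ≤ h) (hn : h + (n + 1) = H + 1)
    (s : S) :
    VA P (Rgap R τ η ΔR H i) (jp (Function.update π i κ)) (n + 1) h s
        + η * (1 - κ h s (τ i h s))
      ≤ VA P (Rgap R τ η ΔR H i) (jp (Function.update π i (detP τ i))) (n + 1) h s :=
  VA_update_add_le_of_le hP hπ hκ hR η hΔ h1 hn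
    (VA_update_le hP hπ hκ hR hη hΔ n (h + 1) (by omega) (by omega)) s

lemma VA_succ_of_eq_jp_detP (P : ℕ → S → (∀ i, A i) → S → ℝ) (f : ℕ → S → (∀ i, A i) → ℝ)
    {ρ : ℕ → S → (∀ i, A i) → ℝ} {τ : ∀ i : Fin m, ℕ → S → A i} {h : ℕ}
    (hρ : ρ h = jp (detP τ) h) (n : ℕ) (s : S) :
    VA P f ρ (n + 1) h s
      = f h s (tgtJ τ h s) + ∑ s', P h s (tgtJ τ h s) s' * VA P f ρ n (h + 1) s' := by
  simp [VA, hρ, jp_detP]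

end Value

lemma reach_nonneg {S : Type} [Fintype S] [DecidableEq S] {m : ℕ} {A : Fin m → Type} {H : ℕ}
    {P : ℕ → S → (∀ i, A i) → S → ℝ} (hP : IsKernel H P) (τ : ∀ i : Fin m, ℕ → S → A i) :
    ∀ k h, 1 ≤ h → h + k ≤ H + 1 → ∀ s s', 0 ≤ reach P τ k h s s' := by
  intro k
  induction k with
  | zero =>
    intro h _ _ s s'
    unfold reach
    split_ifs <;> norm_num
  | succ k ih =>
    intro h h1 hk s s'
    exact sum_nonneg fun u _ => mul_nonneg ((hP h (mem_Icc.mpr ⟨h1, by omega⟩) s _).1 u)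
      (ih (h + 1) (by omega) (by omega) u s')

section Uniqueness

variable {S : Type} [Fintype S] [DecidableEq S] {m : ℕ} {A : Fin m → Type}
  [∀ i, Fintype (A i)] [∀ i, DecidableEq (A i)]

lemma VA_sub_VA_eq_sum_reach (P : ℕ → S → (∀ i, A i) → S → ℝ) (f : ℕ → S → (∀ i, A i) → ℝ)
    (τ : ∀ i : Fin m, ℕ → S → A i) {ρ ρ' : ℕ → S → (∀ i, A i) → ℝ} (n : ℕ) :
    ∀ k h, (∀ h' ∈ Ico h (h + k), ρ h' = jp (detP τ) h' ∧ ρ' h' = jp (detP τ) h') → ∀ s,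
      VA P f ρ (n + k) h s - VA P f ρ' (n + k) h s
        = ∑ u, reach P τ k h s u * (VA P f ρ n (h + k) u - VA P f ρ' n (h + k) u) := by
  intro k
  induction k with
  | zero => simp [reach]
  | succ k ih =>
    intro h hρ s
    have hh := hρ h (mem_Ico.mpr ⟨le_rfl, by omega⟩)
    rw [← add_assoc, VA_succ_of_eq_jp_detP P f hh.1, VA_succ_of_eq_jp_detP P f hh.2,
      add_sub_add_left_eq_sub, ← sum_sub_distrib]
    simp_rw [← mul_sub]
    rw [show h + (k + 1) = h + 1 + k by omega]
    simp_rw [ih (h + 1) (fun h' hh' => hρ h' (by simp only [mem_Ico] at hh' ⊢; omega)),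
      reach, mul_sum, sum_mul]
    rw [sum_comm]
    simp_rw [mul_assoc]

lemma apply_eq_one_of_isNash {H : ℕ} {P : ℕ → S → (∀ i, A i) → S → ℝ} (hP : IsKernel H P)
    {π : ∀ i : Fin m, ℕ → S → A i → ℝ} (hπ : IsPolicy H π) {R : Fin m → ℕ → S → (∀ i, A i) → ℝ}
    {τ : ∀ i : Fin m, ℕ → S → A i} {lo hi : Fin m → ℝ}
    (hR : ∀ i, ∀ h ∈ Icc 1 H, ∀ s, R i h s (tgtJ τ h s) ∈ Set.Icc (lo i) (hi i)) {η : ℝ}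
    (hη : 0 < η) {ΔR : Fin m → ℝ} (hΔ : ∀ i, hi i - lo i ≤ ΔR i)
    (hNE : ∀ i : Fin m, ∀ κ : ℕ → S → A i → ℝ, IsPolicyI H κ → ∀ s : S,
      Vf P (Rgap R τ η ΔR H i) (jp (Function.update π i κ)) H 1 s
        ≤ Vf P (Rgap R τ η ΔR H i) (jp π) H 1 s)
    {h : ℕ} (hh : h ∈ Icc 1 H) (hbefore : ∀ h' ∈ Ico 1 h, ∀ j s, π j h' s (τ j h' s) = 1)
    (i : Fin m) {s₁ s : S} (hreach : 0 < reach P τ (h - 1) 1 s₁ s) :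
    π i h s (τ i h s) = 1 := by
  obtain ⟨h1, hH⟩ := mem_Icc.mp hh
  set Vτ := VA P (Rgap R τ η ΔR H i) (jp (Function.update π i (detP τ i)))
  set Vπ := VA P (Rgap R τ η ΔR H i) (jp π)
  have hle_one : ∀ u, π i h u (τ i h u) ≤ 1 := fun u =>
    apply_le_one_of_sum_eq_one (hπ i h hh u).1 (hπ i h hh u).2 _
  have hgain : ∀ u, η * (1 - π i h u (τ i h u)) ≤ Vτ (H - h + 1) h u - Vπ (H - h + 1) h u := by
    intro u
    have := VA_update_add_le hP hπ (hπ i) (hR i) hη.le (hΔ i) (n := H - h) h1 (by omega) u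
    rw [Function.update_eq_self] at this
    linarith
  have hgain_nonneg : ∀ u, 0 ≤ Vτ (H - h + 1) h u - Vπ (H - h + 1) h u := fun u =>
    (mul_nonneg hη.le (sub_nonneg.mpr (hle_one u))).trans (hgain u)
  have hpropagate : Vτ H 1 s₁ - Vπ H 1 s₁
      = ∑ u, reach P τ (h - 1) 1 s₁ u * (Vτ (H - h + 1) h u - Vπ (H - h + 1) h u) := by
    have hfollow : ∀ h' ∈ Ico 1 (1 + (h - 1)),
        jp (Function.update π i (detP τ i)) h' = jp (detP τ) h' ∧ jp π h' = jp (detP τ) h' := by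
      intro h' hh'
      have hh'H : h' ∈ Icc 1 H := by simp only [mem_Ico, mem_Icc] at hh' ⊢; omega
      have hbefore' := hbefore h' (by simp only [mem_Ico] at hh' ⊢; omega)
      refine ⟨jp_eq_jp_detP (hπ.update (detP_isPolicy H τ i)) hh'H fun j s' => ?_,
        jp_eq_jp_detP hπ hh'H hbefore'⟩
      by_cases hj : j = i
      · subst hj
        simp [detP]
      · rw [Function.update_of_ne hj]
        exact hbefore' j s'
    have := VA_sub_VA_eq_sum_reach P (Rgap R τ η ΔR H i) τ (H - h + 1) (h - 1) 1 hfollow s₁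
    rwa [show H - h + 1 + (h - 1) = H by omega, show 1 + (h - 1) = h by omega] at this
  have hdev : Vτ H 1 s₁ ≤ Vπ H 1 s₁ := by
    simpa [Vf] using hNE i (detP τ i) (detP_isPolicy H τ i) s₁
  have hweighted : reach P τ (h - 1) 1 s₁ s * (η * (1 - π i h s (τ i h s))) ≤ 0 :=
    calc _ ≤ reach P τ (h - 1) 1 s₁ s * (Vτ (H - h + 1) h s - Vπ (H - h + 1) h s) :=
          mul_le_mul_of_nonneg_left (hgain s) hreach.le
      _ ≤ ∑ u, reach P τ (h - 1) 1 s₁ u * (Vτ (H - h + 1) h u - Vπ (H - h + 1) h u) :=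
          single_le_sum (fun u _ => mul_nonneg
            (reach_nonneg hP τ (h - 1) 1 le_rfl (by omega) s₁ u) (hgain_nonneg u)) (mem_univ s)
      _ ≤ 0 := by linarith
  nlinarith [mul_pos hreach hη, hle_one s]

lemma forall_apply_eq_one_of_isNash {H : ℕ} {P : ℕ → S → (∀ i, A i) → S → ℝ}
    (hP : IsKernel H P) {π : ∀ i : Fin m, ℕ → S → A i → ℝ} (hπ : IsPolicy H π)
    {R : Fin m → ℕ → S → (∀ i, A i) → ℝ} {τ : ∀ i : Fin m, ℕ → S → A i} {lo hi : Fin m → ℝ}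
    (hR : ∀ i, ∀ h ∈ Icc 1 H, ∀ s, R i h s (tgtJ τ h s) ∈ Set.Icc (lo i) (hi i)) {η : ℝ}
    (hη : 0 < η) {ΔR : Fin m → ℝ} (hΔ : ∀ i, hi i - lo i ≤ ΔR i)
    (hNE : ∀ i : Fin m, ∀ κ : ℕ → S → A i → ℝ, IsPolicyI H κ → ∀ s : S,
      Vf P (Rgap R τ η ΔR H i) (jp (Function.update π i κ)) H 1 s
        ≤ Vf P (Rgap R τ η ΔR H i) (jp π) H 1 s)
    (hreach : ∀ h ∈ Icc 1 H, ∀ s : S, ∃ s₁ : S, 0 < reach P τ (h - 1) 1 s₁ s) :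
    ∀ h ∈ Icc 1 H, ∀ i s, π i h s (τ i h s) = 1 := by
  intro h
  induction h using Nat.strong_induction_on with
  | _ h ih =>
    intro hh i s
    obtain ⟨s₁, hs₁⟩ := hreach h hh s
    refine apply_eq_one_of_isNash hP hπ hR hη hΔ hNE hh (fun h' hh' => ?_) i hs₁
    obtain ⟨h1', hlt⟩ := mem_Ico.mp hh'
    exact ih h' hlt (mem_Icc.mpr ⟨h1', by linarith [(mem_Icc.mp hh).2]⟩)

end Uniqueness

theorem stmt11_general {S : Type} [Fintype S] [DecidableEq S]
    {m : ℕ} {A : Fin m → Type} [∀ i, Fintype (A i)] [∀ i, DecidableEq (A i)]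
    (H : ℕ)
    (P : ℕ → S → (∀ i, A i) → S → ℝ) (hP : IsKernel H P)
    (R : Fin m → ℕ → S → (∀ i, A i) → ℝ)
    (τ : ∀ i : Fin m, ℕ → S → A i) (η : ℝ) (hη : 0 < η)
    (Rmax Rmin : Fin m → ℝ)
    (hmax : ∀ i : Fin m, IsGreatest
      {x : ℝ | ∃ h ∈ Finset.Icc 1 H, ∃ s : S, ∃ a : ∀ j, A j, x = R i h s a} (Rmax i))
    (hmin : ∀ i : Fin m, IsLeast
      {x : ℝ | ∃ h ∈ Finset.Icc 1 H, ∃ s : S, ∃ a : ∀ j, A j, x = R i h s a} (Rmin i)) :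
    -- (i) best response toward any product policy of the other agents
    (∀ π : ∀ j : Fin m, ℕ → S → A j → ℝ, IsPolicy H π →
      ∀ i : Fin m, ∀ πi : ℕ → S → A i → ℝ, IsPolicyI H πi → ∀ s : S,
        Vf P (Rgap R τ η (fun j => Rmax j - Rmin j) H i)
            (jp (Function.update π i πi)) H 1 s
          ≤ Vf P (Rgap R τ η (fun j => Rmax j - Rmin j) H i)
              (jp (Function.update π i (detP τ i))) H 1 s)
    -- (ii) `π†` is a Nash equilibrium
    ∧ (∀ i : Fin m, ∀ πi : ℕ → S → A i → ℝ, IsPolicyI H πi → ∀ s : S,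
        Vf P (Rgap R τ η (fun j => Rmax j - Rmin j) H i)
            (jp (Function.update (detP τ) i πi)) H 1 s
          ≤ Vf P (Rgap R τ η (fun j => Rmax j - Rmin j) H i) (jp (detP τ)) H 1 s)
    -- (iii) uniqueness under reachability
    ∧ ((∀ h ∈ Finset.Icc 1 H, ∀ s : S, ∃ s₁ : S, 0 < reach P τ (h - 1) 1 s₁ s) →
        ∀ π : ∀ j : Fin m, ℕ → S → A j → ℝ, IsPolicy H π →
          (∀ i : Fin m, ∀ πi : ℕ → S → A i → ℝ, IsPolicyI H πi → ∀ s : S,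
            Vf P (Rgap R τ η (fun j => Rmax j - Rmin j) H i)
                (jp (Function.update π i πi)) H 1 s
              ≤ Vf P (Rgap R τ η (fun j => Rmax j - Rmin j) H i) (jp π) H 1 s) →
          ∀ i : Fin m, ∀ h ∈ Finset.Icc 1 H, ∀ s : S, π i h s (τ i h s) = 1) := by
  have hR : ∀ i, ∀ h ∈ Icc 1 H, ∀ s, R i h s (tgtJ τ h s) ∈ Set.Icc (Rmin i) (Rmax i) :=
    fun i h hh s => ⟨(hmin i).2 ⟨h, hh, s, _, rfl⟩, (hmax i).2 ⟨h, hh, s, _, rfl⟩⟩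
  refine ⟨fun π hπ i πi hπi s => ?_, fun i πi hπi s => ?_, fun hreach π hπ hNE i h hh s => ?_⟩
  · exact VA_update_le hP hπ hπi (hR i) hη.le le_rfl (H + 1 - 1) 1 le_rfl (by omega) s
  · have := VA_update_le hP (detP_isPolicy H τ) hπi (hR i) hη.le
      (ΔR := fun j => Rmax j - Rmin j) le_rfl (H + 1 - 1) 1 le_rfl (by omega) s
    rwa [Function.update_eq_self] at this
  · exact forall_apply_eq_one_of_isNash hP hπ hR hη (fun _ => le_rfl) hNE hreach h hh i s

/-- Under Condition 2 and the `η`-gap attack: (i) for every agent `i` and every product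
policy of the others, `π†_i` is a best response in the post-attack game; (ii) `π†` is a
Nash equilibrium of the post-attack game; (iii) if every state is reachable at every step
under `π†`, then any Nash equilibrium product policy of the post-attack game agrees with
`π†` at every state and step, i.e. `π†` is the unique Nash equilibrium. -/
theorem stmt11 {S : Type} [Fintype S] [DecidableEq S]
    {m : ℕ} {A : Fin m → Type} [∀ i, Fintype (A i)] [∀ i, DecidableEq (A i)]
    (H : ℕ) (hH : 1 ≤ H) (hm : 1 ≤ m)
    (P : ℕ → S → (∀ i, A i) → S → ℝ) (hP : IsKernel H P)
    (R : Fin m → ℕ → S → (∀ i, A i) → ℝ) (hR : IsReward H R)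
    (τ : ∀ i : Fin m, ℕ → S → A i) (η : ℝ) (hη : 0 < η)
    (Rmax Rmin : Fin m → ℝ)
    (hmax : ∀ i : Fin m, IsGreatest
      {x : ℝ | ∃ h ∈ Finset.Icc 1 H, ∃ s : S, ∃ a : ∀ j, A j, x = R i h s a} (Rmax i))
    (hmin : ∀ i : Fin m, IsLeast
      {x : ℝ | ∃ h ∈ Finset.Icc 1 H, ∃ s : S, ∃ a : ∀ j, A j, x = R i h s a} (Rmin i))
    -- Condition 2
    (hcond2 : ∀ i : Fin m, ∀ h ∈ Finset.Icc 1 H, ∀ s : S,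
      ((H - h : ℕ) : ℝ) * (Rmax i - Rmin i) ≤ R i h s (tgtJ τ h s) - η) :
    -- (i) best response toward any product policy of the other agents
    (∀ π : ∀ j : Fin m, ℕ → S → A j → ℝ, IsPolicy H π →
      ∀ i : Fin m, ∀ πi : ℕ → S → A i → ℝ, IsPolicyI H πi → ∀ s : S,
        Vf P (Rgap R τ η (fun j => Rmax j - Rmin j) H i)
            (jp (Function.update π i πi)) H 1 s
          ≤ Vf P (Rgap R τ η (fun j => Rmax j - Rmin j) H i)
              (jp (Function.update π i (detP τ i))) H 1 s)
    -- (ii) `π†` is a Nash equilibrium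
    ∧ (∀ i : Fin m, ∀ πi : ℕ → S → A i → ℝ, IsPolicyI H πi → ∀ s : S,
        Vf P (Rgap R τ η (fun j => Rmax j - Rmin j) H i)
            (jp (Function.update (detP τ) i πi)) H 1 s
          ≤ Vf P (Rgap R τ η (fun j => Rmax j - Rmin j) H i) (jp (detP τ)) H 1 s)
    -- (iii) uniqueness under reachability
    ∧ ((∀ h ∈ Finset.Icc 1 H, ∀ s : S, ∃ s₁ : S, 0 < reach P τ (h - 1) 1 s₁ s) →
        ∀ π : ∀ j : Fin m, ℕ → S → A j → ℝ, IsPolicy H π →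
          (∀ i : Fin m, ∀ πi : ℕ → S → A i → ℝ, IsPolicyI H πi → ∀ s : S,
            Vf P (Rgap R τ η (fun j => Rmax j - Rmin j) H i)
                (jp (Function.update π i πi)) H 1 s
              ≤ Vf P (Rgap R τ η (fun j => Rmax j - Rmin j) H i) (jp π) H 1 s) →
          ∀ i : Fin m, ∀ h ∈ Finset.Icc 1 H, ∀ s : S, π i h s (τ i h s) = 1) :=
  stmt11_general H P hP R τ η hη Rmax Rmin hmax hmin

end MGAttack
end

section
/- Let (S, (A_i)_{i=1}^m, H, P, (R_i)_{i=1}^m) be a tabular episodic Markov game and π† a deterministic target policy. Under the mixed attack, for every agent i, every Markov product policy π, and every initial state s₁: Ṽ^{π†_i × π_{-i}}_{i,1}(s₁) − Ṽ^{π}_{i,1}(s₁) = E[ ∑_{h=1}^H (1 − π_{i,h}(π†_{i,h}(s_h)|s_h)) · R_{i,h}(s_h, π†_h(s_h)) ] ≥ 0, where the state sequence is generated by s_{h+1} ∼ P_h(·|s_h, π†_h(s_h)) started at s₁ (the post-attack state process, which does not depend on the agents' actions). -/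
open Finset

namespace MGAttack

section Aux

variable {S : Type} [Fintype S] [DecidableEq S]
variable {m : ℕ} {A : Fin m → Type} [∀ i, Fintype (A i)] [∀ i, DecidableEq (A i)]

lemma sum_pi_prod (g : ∀ j, A j → ℝ) :
    ∑ a : ∀ j, A j, ∏ j, g j (a j) = ∏ j, ∑ b, g j b := by
  rw [Finset.prod_univ_sum, Fintype.piFinset_univ]

lemma marg (π' : ∀ j, A j → ℝ) (hs : ∀ j, ∑ b, π' j b = 1) (i : Fin m) (c : A i) :
    ∑ a : ∀ j, A j, (∏ j, π' j (a j)) * (if a i = c then 1 else 0) = π' i c := by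
  have upd_prod : ∀ a : ∀ j, A j,
      ∏ j, Function.update π' i (fun b => π' i b * (if b = c then 1 else 0)) j (a j)
      = (π' i (a i) * (if a i = c then 1 else 0))
        * ∏ j ∈ Finset.univ.erase i, π' j (a j) := by
    intro a
    rw [← Finset.mul_prod_erase Finset.univ _ (Finset.mem_univ i)]
    congr 1
    · simp [Function.update_self]
    · exact Finset.prod_congr rfl fun j hj => by
        rw [Function.update_of_ne (Finset.ne_of_mem_erase hj)]
  have key : ∀ a : ∀ j, A j, (∏ j, π' j (a j)) * (if a i = c then 1 else 0)
      = ∏ j, Function.update π' i (fun b => π' i b * (if b = c then 1 else 0)) j (a j) := by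
    intro a
    rw [upd_prod a, ← Finset.mul_prod_erase Finset.univ (fun j => π' j (a j))
      (Finset.mem_univ i)]
    ring
  simp only [key]
  rw [sum_pi_prod]
  rw [← Finset.mul_prod_erase Finset.univ _ (Finset.mem_univ i)]
  rw [Finset.prod_eq_one (fun j hj => by
    rw [Finset.sum_congr rfl (fun b _ => by
      rw [Function.update_of_ne (Finset.ne_of_mem_erase hj)])]
    exact hs j), mul_one]
  simp [Function.update_self, mul_ite, mul_one, mul_zero]

lemma VA_eq (Pm : ℕ → S → (∀ j, A j) → S → ℝ) (Ps : ℕ → S → S → ℝ)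
    (hPm : ∀ h s a s', Pm h s a s' = Ps h s s')
    (f : ℕ → S → (∀ j, A j) → ℝ) (πj : ℕ → S → (∀ j, A j) → ℝ) :
    ∀ n h, (∀ h', h ≤ h' → h' < h + n → ∀ s, ∑ a, πj h' s a = 1) →
      ∀ s, VA Pm f πj n h s = SSum Ps (fun h s => ∑ a, πj h s a * f h s a) n h s := by
  intro n
  induction n with
  | zero => intro h _ s; simp [VA, SSum]
  | succ n ih =>
    intro h hj s
    simp only [VA, SSum]
    have h1 : ∀ a, πj h s a * (f h s a + ∑ s', Pm h s a s' * VA Pm f πj n (h + 1) s')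
        = πj h s a * f h s a
          + πj h s a * (∑ s', Ps h s s' * VA Pm f πj n (h + 1) s') := by
      intro a
      simp only [hPm]; ring
    rw [Finset.sum_congr rfl fun a _ => h1 a, Finset.sum_add_distrib,
        ← Finset.sum_mul, hj h le_rfl (by omega), one_mul]
    congr 1
    refine Finset.sum_congr rfl fun s' _ => ?_
    rw [ih (h + 1) (fun h' hl hu s => hj h' (by omega) (by omega) s) s']

lemma SSum_sub (Ps : ℕ → S → S → ℝ) (f g : ℕ → S → ℝ) :
    ∀ n h s, SSum Ps (fun h s => f h s - g h s) n h s
      = SSum Ps f n h s - SSum Ps g n h s := by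
  intro n
  induction n with
  | zero => intro h s; simp [SSum]
  | succ n ih =>
    intro h s
    simp only [SSum]
    rw [Finset.sum_congr rfl (fun s' _ => by rw [ih (h + 1) s', mul_sub]),
        Finset.sum_sub_distrib]
    ring

lemma SSum_congr (Ps : ℕ → S → S → ℝ) (f g : ℕ → S → ℝ) :
    ∀ n h, (∀ h' s, h ≤ h' → h' < h + n → f h' s = g h' s) →
      ∀ s, SSum Ps f n h s = SSum Ps g n h s := by
  intro n
  induction n with
  | zero => intro h _ s; simp [SSum]
  | succ n ih =>
    intro h hfg s
    simp only [SSum]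
    rw [hfg h s le_rfl (by omega)]
    congr 1
    refine Finset.sum_congr rfl fun s' _ => ?_
    rw [ih (h + 1) (fun h' s hl hu => hfg h' s (by omega) (by omega)) s']

lemma SSum_nonneg (Ps : ℕ → S → S → ℝ) (f : ℕ → S → ℝ) :
    ∀ n h, (∀ h' s, h ≤ h' → h' < h + n → 0 ≤ f h' s) →
      (∀ h' s s', h ≤ h' → h' < h + n → 0 ≤ Ps h' s s') →
      ∀ s, 0 ≤ SSum Ps f n h s := by
  intro n
  induction n with
  | zero => intro h _ _ s; simp [SSum]
  | succ n ih =>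
    intro h hf hPs s
    simp only [SSum]
    refine add_nonneg (hf h s le_rfl (by omega)) (Finset.sum_nonneg fun s' _ => ?_)
    exact mul_nonneg (hPs h s s' le_rfl (by omega))
      (ih (h + 1) (fun h' s hl hu => hf h' s (by omega) (by omega))
        (fun h' s s' hl hu => hPs h' s s' (by omega) (by omega)) s')

end Aux

/-- Under the mixed attack, for every agent `i`, Markov product policy `π`, and initial
state `s₁`, the value gain of unilaterally switching agent `i` to `π†_i` equals the
expected sum, along the post-attack state process `s_{h+1} ∼ P_h(·|s_h, π†_h(s_h))`
(which does not depend on the agents' actions), of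
`(1 − π_{i,h}(π†_{i,h}(s_h)|s_h))·R_{i,h}(s_h, π†_h(s_h))`, and this quantity is
nonnegative. -/
theorem stmt13 {S : Type} [Fintype S] [DecidableEq S]
    {m : ℕ} {A : Fin m → Type} [∀ i, Fintype (A i)] [∀ i, DecidableEq (A i)]
    (H : ℕ) (hH : 1 ≤ H) (hm : 1 ≤ m)
    (P : ℕ → S → (∀ i, A i) → S → ℝ) (hP : IsKernel H P)
    (R : Fin m → ℕ → S → (∀ i, A i) → ℝ) (hR : IsReward H R)
    (τ : ∀ i : Fin m, ℕ → S → A i)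
    (π : ∀ j : Fin m, ℕ → S → A j → ℝ) (hπ : IsPolicy H π) (i : Fin m) (s₁ : S) :
    (Vf (Pmix P τ) (Rmix R τ i) (jp (Function.update π i (detP τ i))) H 1 s₁
        - Vf (Pmix P τ) (Rmix R τ i) (jp π) H 1 s₁
      = SSum (fun h s s' => P h s (tgtJ τ h s) s')
          (fun h s => (1 - π i h s (τ i h s)) * R i h s (tgtJ τ h s)) H 1 s₁)
    ∧ 0 ≤ SSum (fun h s s' => P h s (tgtJ τ h s) s')
          (fun h s => (1 - π i h s (τ i h s)) * R i h s (tgtJ τ h s)) H 1 s₁ := by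
  set π' := Function.update π i (detP τ i) with hπ'def
  set Ps : ℕ → S → S → ℝ := fun h s s' => P h s (tgtJ τ h s) s' with hPs
  have hwin : ∀ h', 1 ≤ h' → h' < 1 + H → h' ∈ Finset.Icc 1 H := by
    intro h' h1 h2; rw [Finset.mem_Icc]; omega
  have hdet : ∀ h s, ∑ b, detP τ i h s b = 1 := by
    intro h s; simp [detP]
  have hπ'sum : ∀ h ∈ Finset.Icc 1 H, ∀ s, ∀ j, ∑ b, π' j h s b = 1 := by
    intro h hh s j
    by_cases hji : j = i
    · subst hji; rw [hπ'def, Function.update_self]; exact hdet h s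
    · rw [hπ'def, Function.update_of_ne hji]; exact (hπ j h hh s).2
  have hπsum : ∀ h ∈ Finset.Icc 1 H, ∀ s, ∀ j, ∑ b, π j h s b = 1 :=
    fun h hh s j => (hπ j h hh s).2
  have hjp : ∀ (ρ : ∀ j : Fin m, ℕ → S → A j → ℝ),
      (∀ h ∈ Finset.Icc 1 H, ∀ s, ∀ j, ∑ b, ρ j h s b = 1) →
      ∀ h', 1 ≤ h' → h' < 1 + H → ∀ s, ∑ a, jp ρ h' s a = 1 := by
    intro ρ hρ h' h1 h2 s
    simp only [jp]
    rw [sum_pi_prod]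
    exact Finset.prod_eq_one fun j _ => hρ h' (hwin h' h1 h2) s j
  have hmarg : ∀ (ρ : ∀ j : Fin m, ℕ → S → A j → ℝ),
      (∀ h ∈ Finset.Icc 1 H, ∀ s, ∀ j, ∑ b, ρ j h s b = 1) →
      ∀ h', 1 ≤ h' → h' < 1 + H → ∀ s,
        ∑ a, jp ρ h' s a * Rmix R τ i h' s a
          = ρ i h' s (τ i h' s) * R i h' s (tgtJ τ h' s) := by
    intro ρ hρ h' h1 h2 s
    simp only [jp, Rmix]
    have : ∀ a : ∀ j, A j,
        (∏ j, ρ j h' s (a j)) * ((if a i = τ i h' s then (1 : ℝ) else 0)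
            * R i h' s (tgtJ τ h' s))
        = ((∏ j, ρ j h' s (a j)) * (if a i = τ i h' s then (1 : ℝ) else 0))
            * R i h' s (tgtJ τ h' s) := fun a => by ring
    rw [Finset.sum_congr rfl fun a _ => this a, ← Finset.sum_mul,
        marg (fun j b => ρ j h' s b) (fun j => hρ h' (hwin h' h1 h2) s j) i (τ i h' s)]
  have e1 := VA_eq (Pmix P τ) Ps (fun h s a s' => rfl) (Rmix R τ i) (jp π') H 1
    (fun h' h1 h2 s => hjp π' hπ'sum h' h1 h2 s) s₁
  have e2 := VA_eq (Pmix P τ) Ps (fun h s a s' => rfl) (Rmix R τ i) (jp π) H 1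
    (fun h' h1 h2 s => hjp π hπsum h' h1 h2 s) s₁
  constructor
  · show VA (Pmix P τ) (Rmix R τ i) (jp π') (H + 1 - 1) 1 s₁
      - VA (Pmix P τ) (Rmix R τ i) (jp π) (H + 1 - 1) 1 s₁ = _
    rw [Nat.add_sub_cancel, e1, e2, ← SSum_sub]
    refine SSum_congr Ps _ _ H 1 (fun h' s h1 h2 => ?_) s₁
    rw [hmarg π' hπ'sum h' h1 h2 s, hmarg π hπsum h' h1 h2 s]
    have : π' i h' s (τ i h' s) = 1 := by
      rw [hπ'def, Function.update_self, detP, if_pos rfl]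
    rw [this]; ring
  · refine SSum_nonneg Ps _ H 1 (fun h' s h1 h2 => ?_) (fun h' s s' h1 h2 => ?_) s₁
    · have hmem := hwin h' h1 h2
      have hle : π i h' s (τ i h' s) ≤ 1 := by
        rw [← (hπ i h' hmem s).2]
        exact Finset.single_le_sum (fun b _ => (hπ i h' hmem s).1 b) (Finset.mem_univ _)
      exact mul_nonneg (by linarith) (hR i h' hmem s (tgtJ τ h' s)).1
    · exact (hP h' (hwin h' h1 h2) s (tgtJ τ h' s)).1 s'

end MGAttack
end

section
/- Let (S, (A_i)_{i=1}^m, H, P, (R_i)_{i=1}^m) be a tabular episodic Markov game, π† a deterministic target policy, and R_min = min_{i,h,s} R_{i,h}(s, π†_h(s)) > 0. Suppose the agents are attacked by the mixed attack and deploy Markov product policies π¹,…,π^K over K episodes with initial states s₁¹,…,s₁^K. Then for every agent i, the best-in-hindsight regret in the post-attack game satisfies Reg_i(K,H) ≥ R_min · ∑_{k=1}^K E[ ∑_{h=1}^H 1(a^k_{i,h} ≠ π†_{i,h}(s^k_h)) ], where episode k's trajectory is generated in the post-attack game under π^k from s₁^k. -/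
open Finset

namespace MGAttack

set_option linter.unusedSectionVars false

lemma sum_prod_mul {m : ℕ} {A : Fin m → Type} [∀ i, Fintype (A i)]
    (π : ∀ j : Fin m, A j → ℝ) (i : Fin m) (G : A i → ℝ) :
    ∑ a : ∀ j, A j, (∏ j, π j (a j)) * G (a i)
      = (∑ b, π i b * G b) * ∏ j ∈ univ.erase i, ∑ b, π j b := by
  classical
  set f : ∀ j : Fin m, A j → ℝ :=
    Function.update (fun j (b : A j) => π j b) i (fun b => π i b * G b) with hf
  have h1 : ∀ a : ∀ j, A j, (∏ j, π j (a j)) * G (a i) = ∏ j, f j (a j) := by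
    intro a
    rw [← Finset.mul_prod_erase univ (fun j => π j (a j)) (mem_univ i),
        ← Finset.mul_prod_erase univ (fun j => f j (a j)) (mem_univ i)]
    have h2 : ∀ j ∈ univ.erase i, f j (a j) = π j (a j) := by
      intro j hj
      rw [hf, Function.update_of_ne (Finset.ne_of_mem_erase hj)]
    rw [Finset.prod_congr rfl h2, hf, Function.update_self]
    ring
  rw [Finset.sum_congr rfl (fun a _ => h1 a), ← Fintype.prod_sum,
      ← Finset.mul_prod_erase univ (fun j => ∑ b, f j b) (mem_univ i)]
  congr 1
  · rw [hf, Function.update_self]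
  · exact Finset.prod_congr rfl fun j hj => by
      rw [hf, Function.update_of_ne (Finset.ne_of_mem_erase hj)]

lemma key_ind {S : Type} [Fintype S] [DecidableEq S]
    {m : ℕ} {A : Fin m → Type} [∀ i, Fintype (A i)] [∀ i, DecidableEq (A i)]
    (H : ℕ) (P : ℕ → S → (∀ i, A i) → S → ℝ) (hP : IsKernel H P)
    (R : Fin m → ℕ → S → (∀ i, A i) → ℝ)
    (τ : ∀ i : Fin m, ℕ → S → A i) (Rm : ℝ) (hRmpos : 0 < Rm)
    (hRm : ∀ h ∈ Finset.Icc 1 H, ∀ s : S, ∀ i, Rm ≤ R i h s (tgtJ τ h s))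
    (π : ∀ j : Fin m, ℕ → S → A j → ℝ) (hπ : IsPolicy H π) (i : Fin m) :
    ∀ n h, 1 ≤ h → h + n ≤ H + 1 → ∀ s,
      Rm * VA (Pmix P τ) (fun h s a => if a i = τ i h s then (0:ℝ) else 1) (jp π) n h s
        ≤ VA (Pmix P τ) (Rmix R τ i)
            (jp (Function.update π i (fun h s b => if b = τ i h s then (1:ℝ) else 0))) n h s
          - VA (Pmix P τ) (Rmix R τ i) (jp π) n h s := by
  classical
  set π' := Function.update π i (fun h s (b : A i) => if b = τ i h s then (1:ℝ) else 0) with hπ'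
  intro n
  induction n with
  | zero => intro h _ _ s; simp [VA]
  | succ n ih =>
    intro h h1 hle s
    have hhH : h ∈ Finset.Icc 1 H := Finset.mem_Icc.mpr ⟨h1, by omega⟩
    -- policy facts at step h
    have hpol := fun j => (hπ j h hhH s)
    set p : ℝ := π i h s (τ i h s) with hp
    have hp0 : 0 ≤ p := (hpol i).1 _
    have hp1 : p ≤ 1 := by
      rw [← (hpol i).2]
      exact Finset.single_le_sum (fun b _ => (hpol i).1 b) (mem_univ _)
    have herase : ∀ (q : ∀ j : Fin m, A j → ℝ), (∀ j ∈ univ.erase i, ∑ b, q j b = 1) →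
        ∏ j ∈ univ.erase i, ∑ b, q j b = 1 := fun q hq => Finset.prod_eq_one hq
    have herase1 : ∏ j ∈ univ.erase i, ∑ b, π j h s b = 1 :=
      Finset.prod_eq_one fun j _ => (hpol j).2
    have herase2 : ∏ j ∈ univ.erase i, ∑ b, π' j h s b = 1 :=
      Finset.prod_eq_one fun j hj => by
        rw [hπ', Function.update_of_ne (Finset.ne_of_mem_erase hj)]; exact (hpol j).2
    -- sums of joint pmfs
    have hsum1 : ∑ a : ∀ j, A j, jp π h s a = 1 := by
      have := sum_prod_mul (fun j => π j h s) i (fun _ => (1:ℝ))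
      simpa [jp, herase1, (hpol i).2] using this
    have hdet : ∑ b, π' i h s b = 1 := by
      rw [hπ', Function.update_self]; simp
    have hsum2 : ∑ a : ∀ j, A j, jp π' h s a = 1 := by
      have := sum_prod_mul (fun j => π' j h s) i (fun _ => (1:ℝ))
      simpa [jp, herase2, hdet] using this
    set Rg : ℝ := R i h s (tgtJ τ h s) with hRg
    have hRgRm : Rm ≤ Rg := hRm h hhH s i
    -- step reward under π
    have hstep1 : ∑ a : ∀ j, A j, jp π h s a * Rmix R τ i h s a = p * Rg := by
      have key := sum_prod_mul (fun j => π j h s) i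
        (fun b => (if b = τ i h s then (1:ℝ) else 0) * Rg)
      have e1 : ∀ b, π i h s b * ((if b = τ i h s then (1:ℝ) else 0) * Rg)
          = if b = τ i h s then π i h s b * Rg else 0 := fun b => by split <;> ring
      rw [Finset.sum_congr rfl (fun b _ => e1 b),
        Finset.sum_ite_eq' univ (τ i h s) (fun b => π i h s b * Rg)] at key
      simpa [jp, Rmix, herase1, hp] using key
    -- step reward under π'
    have hstep2 : ∑ a : ∀ j, A j, jp π' h s a * Rmix R τ i h s a = Rg := by
      have key := sum_prod_mul (fun j => π' j h s) i
        (fun b => (if b = τ i h s then (1:ℝ) else 0) * Rg)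
      have e1 : ∀ b : A i, π' i h s b * ((if b = τ i h s then (1:ℝ) else 0) * Rg)
          = if b = τ i h s then Rg else 0 := fun b => by
        rw [hπ', Function.update_self]; split <;> ring
      rw [Finset.sum_congr rfl (fun b _ => e1 b),
        Finset.sum_ite_eq' univ (τ i h s) (fun _ => Rg)] at key
      simpa [jp, Rmix, herase2] using key
    -- step indicator under π
    have hind : ∑ a : ∀ j, A j, jp π h s a * (if a i = τ i h s then (0:ℝ) else 1)
        = 1 - p := by
      have key := sum_prod_mul (fun j => π j h s) i
        (fun b => if b = τ i h s then (0:ℝ) else 1)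
      have e1 : ∀ b, π i h s b * (if b = τ i h s then (0:ℝ) else 1)
          = π i h s b - (if b = τ i h s then π i h s b else 0) := fun b => by split <;> ring
      rw [Finset.sum_congr rfl (fun b _ => e1 b), Finset.sum_sub_distrib, (hpol i).2,
        Finset.sum_ite_eq' univ (τ i h s) (fun b => π i h s b)] at key
      simpa [jp, herase1, hp] using key
    -- expansion of VA at a step where the joint pmf sums to one
    have expand : ∀ (f : ℕ → S → (∀ j, A j) → ℝ) (q : ℕ → S → (∀ j, A j) → ℝ),
        (∑ a : ∀ j, A j, q h s a = 1) →
        VA (Pmix P τ) f q (n+1) h s = (∑ a : ∀ j, A j, q h s a * f h s a)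
          + ∑ s', P h s (tgtJ τ h s) s' * VA (Pmix P τ) f q n (h+1) s' := by
      intro f q hq
      show ∑ a : ∀ j, A j, q h s a * (f h s a
          + ∑ s', Pmix P τ h s a s' * VA (Pmix P τ) f q n (h+1) s') = _
      simp only [Pmix, mul_add]
      rw [Finset.sum_add_distrib, ← Finset.sum_mul, hq, one_mul]
    rw [expand _ _ hsum1, expand _ _ hsum1, expand _ _ hsum2, hstep1, hstep2, hind]
    set W := fun s' => VA (Pmix P τ)
      (fun h s a => if a i = τ i h s then (0:ℝ) else 1) (jp π) n (h+1) s' with hW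
    set V := fun s' => VA (Pmix P τ) (Rmix R τ i) (jp π) n (h+1) s' with hV
    set V' := fun s' => VA (Pmix P τ) (Rmix R τ i) (jp π') n (h+1) s' with hV'
    have hPn : ∀ s', 0 ≤ P h s (tgtJ τ h s) s' := (hP h hhH s (tgtJ τ h s)).1
    have hB : Rm * ∑ s', P h s (tgtJ τ h s) s' * W s'
        ≤ (∑ s', P h s (tgtJ τ h s) s' * V' s') - ∑ s', P h s (tgtJ τ h s) s' * V s' := by
      rw [Finset.mul_sum, ← Finset.sum_sub_distrib]
      refine Finset.sum_le_sum fun s' _ => ?_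
      have := ih (h+1) (by omega) (by omega) s'
      calc Rm * (P h s (tgtJ τ h s) s' * W s')
          = P h s (tgtJ τ h s) s' * (Rm * W s') := by ring
        _ ≤ P h s (tgtJ τ h s) s' * (V' s' - V s') :=
            mul_le_mul_of_nonneg_left this (hPn s')
        _ = P h s (tgtJ τ h s) s' * V' s' - P h s (tgtJ τ h s) s' * V s' := by ring
    have hA : Rm * (1 - p) ≤ Rg - p * Rg := by
      have : (1 - p) * Rm ≤ (1 - p) * Rg :=
        mul_le_mul_of_nonneg_left hRgRm (by linarith)
      nlinarith
    nlinarith [hB, hA]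


/-- Under the mixed attack with `R_min = min_{i,h,s} R_{i,h}(s,π†_h(s)) > 0`, the
best-in-hindsight regret of every agent `i` in the post-attack game is at least
`R_min` times the expected number of steps on which agent `i` deviates from the target
action (witnessed by the comparator policy `π†_i`, so the supremum defining the regret is
at least this bound). -/
theorem stmt15 {S : Type} [Fintype S] [DecidableEq S]
    {m : ℕ} {A : Fin m → Type} [∀ i, Fintype (A i)] [∀ i, DecidableEq (A i)]
    (H : ℕ) (hH : 1 ≤ H) (hm : 1 ≤ m)
    (P : ℕ → S → (∀ i, A i) → S → ℝ) (hP : IsKernel H P)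
    (R : Fin m → ℕ → S → (∀ i, A i) → ℝ) (hR : IsReward H R)
    (τ : ∀ i : Fin m, ℕ → S → A i)
    (Rm : ℝ)
    (hRm : IsLeast {x : ℝ | ∃ i : Fin m, ∃ h ∈ Finset.Icc 1 H, ∃ s : S,
        x = R i h s (tgtJ τ h s)} Rm)
    (hRmpos : 0 < Rm)
    -- the K episodes
    (K : ℕ) (πk : Fin K → ∀ j : Fin m, ℕ → S → A j → ℝ) (hπk : ∀ k, IsPolicy H (πk k))
    (s₁ : Fin K → S) :
    ∀ i : Fin m, ∃ πi' : ℕ → S → A i → ℝ, IsPolicyI H πi' ∧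
      Rm * ∑ k : Fin K, VA (Pmix P τ)
            (fun h s a => if a i = τ i h s then (0 : ℝ) else 1) (jp (πk k)) H 1 (s₁ k)
        ≤ ∑ k : Fin K,
            (Vf (Pmix P τ) (Rmix R τ i) (jp (Function.update (πk k) i πi')) H 1 (s₁ k)
              - Vf (Pmix P τ) (Rmix R τ i) (jp (πk k)) H 1 (s₁ k)) := by
  intro i
  refine ⟨fun h s b => if b = τ i h s then (1:ℝ) else 0, ?_, ?_⟩
  · intro h _ s
    constructor
    · intro b; by_cases hb : b = τ i h s <;> simp [hb]
    · simp
  · have hlow : ∀ h ∈ Finset.Icc 1 H, ∀ s : S, ∀ j, Rm ≤ R j h s (tgtJ τ h s) := by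
      intro h hh s j
      exact hRm.2 ⟨j, h, hh, s, rfl⟩
    rw [Finset.mul_sum]
    refine Finset.sum_le_sum fun k _ => ?_
    have key := key_ind H P hP R τ Rm hRmpos hlow (πk k) (hπk k) i H 1 le_rfl
      (by omega) (s₁ k)
    simpa [Vf, Nat.add_sub_cancel] using key

end MGAttack
end
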